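/- Assume the Continuum Hypothesis. Then there exists a maximal almost disjoint family 𝒜 of infinite subsets of ℕ such that every A ∈ 𝒜 is not an IP-set, and for every AP-set B ⊆ ℕ and every finite-to-one function f : B → ℕ there exist an AP-set C ⊆ B and A ∈ 𝒜 with f[C] ⊆ A. -/

import Mathlib

open Set Filter

/-- `A` contains arithmetic progressions of all finite lengths. -/
def IsAPSet (A : Set ℕ) : Prop :=
  ∀ k : ℕ, ∃ a d : ℕ, 0 < d ∧ ∀ i < k, a + i * d ∈ A

/-- The set of finite sums of distinct elements of `B`. -/
def FS (B : Set ℕ) : Set ℕ :=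
  {n | ∃ F : Finset ℕ, F.Nonempty ∧ ↑F ⊆ B ∧ n = ∑ i ∈ F, i}

/-- `S` is an IP-set: it contains `FS B` for some infinite `B`. -/
def IsIPSet (S : Set ℕ) : Prop :=
  ∃ B : Set ℕ, B.Infinite ∧ FS B ⊆ S

/-- `f` is finite-to-one on `C`. -/
def FinToOneOn (f : ℕ → ℕ) (C : Set ℕ) : Prop :=
  ∀ m : ℕ, (C ∩ f ⁻¹' {m}).Finite

/-- The Continuum Hypothesis. -/
def ContinuumHypothesis : Prop := Cardinal.aleph 1 = Cardinal.continuum.{0}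

/-!
Under CH, enumerate in order type `ω₁` all infinite sets `D` and all pairs `(B, f)` of an AP-set
and a map finite-to-one on it, and build the family by transfinite recursion, adding at each stage
at most one set, almost disjoint from the countably many earlier ones and not IP. For `D` this is an
infinite non-IP subset of `D`, added if `D` is still almost disjoint from all earlier sets. For
`(B, f)`, if no earlier set absorbs an image of an AP-subset of `B`, it is `f[C]` for an AP-set
`C ⊆ B`.

Such a `C` is a union of finite blocks `P k ⊆ B`, where `P k` contains a `k`-term progression and
its `f`-values avoid the first `k` earlier sets, exceed twice the `f`-values of the previous blocks,
and are pairwise equal or far apart. The blocks exist because being an AP-set is partition regular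
(finite van der Waerden, obtained from Gallai's theorem by compactness). They prevent `x`, `y` and
`x + y` from all lying in `f[C]` once `y` is in a later block than `x`, so `f[C]` is not IP.
-/

open Topology

def HasAPOfLength (A : Set ℕ) (k : ℕ) : Prop :=
  ∃ a d : ℕ, 0 < d ∧ ∀ i < k, a + i * d ∈ A

theorem HasAPOfLength.mono {A B : Set ℕ} {k : ℕ} (h : HasAPOfLength A k) (hAB : A ⊆ B) :
    HasAPOfLength B k :=
  let ⟨a, d, hd, hA⟩ := h
  ⟨a, d, hd, fun i hi => hAB (hA i hi)⟩

theorem HasAPOfLength.mono_length {A : Set ℕ} {k l : ℕ} (h : HasAPOfLength A k) (hlk : l ≤ k) :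
    HasAPOfLength A l :=
  let ⟨a, d, hd, hA⟩ := h
  ⟨a, d, hd, fun i hi => hA i (by omega)⟩

namespace IsAPSet

variable {D : Set ℕ}

theorem mono {A : Set ℕ} (hD : IsAPSet D) (hDA : D ⊆ A) : IsAPSet A :=
  fun k => HasAPOfLength.mono (hD k) hDA

theorem infinite (hD : IsAPSet D) : D.Infinite := by
  refine infinite_of_forall_exists_gt fun n => ?_
  obtain ⟨a, d, hd, h⟩ := hD (n + 2)
  exact ⟨a + (n + 1) * d, h (n + 1) (by omega), by nlinarith⟩

theorem nonempty (hD : IsAPSet D) : D.Nonempty :=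
  hD.infinite.nonempty

end IsAPSet

theorem vanDerWaerden_bool (k : ℕ) :
    ∃ W, ∀ χ : ℕ → Bool, ∃ a d, 0 < d ∧ a + k * d < W ∧ ∀ i < k, χ (a + i * d) = χ a := by
  by_contra! hW
  choose χs hχs using hW
  obtain ⟨χ, -, hχ⟩ :=
    (isCompact_univ (X := ℕ → Bool)).exists_mapClusterPt (f := atTop) (u := χs) (by simp)
  obtain ⟨d, hd, b, c, hc⟩ := Combinatorics.exists_mono_homothetic_copy (Finset.range k) χ
  have hnear : (Iic (b + k * d)).pi (fun n => {χ n}) ∈ 𝓝 χ :=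
    set_pi_mem_nhds (finite_Iic _) fun n _ => mem_nhds_discrete.2 rfl
  obtain ⟨W, hWχ, hW⟩ :=
    ((hχ.frequently hnear).and_eventually (eventually_gt_atTop (b + k * d))).exists
  obtain ⟨i, hi, hne⟩ := hχs W b d hd hW
  have hcolor : ∀ j < k, χs W (b + j * d) = c := fun j hj => by
    have : j * d ≤ k * d := Nat.mul_le_mul_right d hj.le
    rw [hWχ _ (by simp only [mem_Iic]; omega), ← hc j (Finset.mem_range.2 hj), smul_eq_mul,
      mul_comm, add_comm]
  exact hne ((hcolor i hi).trans (by simpa using (hcolor 0 (by omega)).symm))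

namespace IsAPSet

variable {D : Set ℕ}

theorem hasAPOfLength_inter_or_diff (hD : IsAPSet D) (X : Set ℕ) (k : ℕ) :
    HasAPOfLength (D ∩ X) k ∨ HasAPOfLength (D \ X) k := by
  classical
  obtain ⟨W, hW⟩ := vanDerWaerden_bool k
  obtain ⟨a₀, d₀, hd₀, hD₀⟩ := hD W
  obtain ⟨a, d, hd, hlt, hmono⟩ := hW fun n => decide (a₀ + n * d₀ ∈ X)
  have hpt : ∀ i < k, a₀ + a * d₀ + i * (d * d₀) ∈ D ∧
      (a₀ + a * d₀ + i * (d * d₀) ∈ X ↔ a₀ + a * d₀ ∈ X) := fun i hi => by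
    have : i * d ≤ k * d := Nat.mul_le_mul_right d hi.le
    rw [show a₀ + a * d₀ + i * (d * d₀) = a₀ + (a + i * d) * d₀ by ring]
    exact ⟨hD₀ _ (by omega), by simpa using hmono i hi⟩
  by_cases ha : a₀ + a * d₀ ∈ X
  · exact .inl ⟨_, _, Nat.mul_pos hd hd₀, fun i hi => ⟨(hpt i hi).1, (hpt i hi).2.2 ha⟩⟩
  · exact .inr ⟨_, _, Nat.mul_pos hd hd₀,
      fun i hi => ⟨(hpt i hi).1, fun h => ha ((hpt i hi).2.1 h)⟩⟩

theorem inter_or_diff (hD : IsAPSet D) (X : Set ℕ) : IsAPSet (D ∩ X) ∨ IsAPSet (D \ X) := by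
  by_contra! h
  obtain ⟨k₁, hk₁⟩ := not_forall.1 h.1
  obtain ⟨k₂, hk₂⟩ := not_forall.1 h.2
  rcases hD.hasAPOfLength_inter_or_diff X (max k₁ k₂) with h₁ | h₂
  · exact hk₁ (h₁.mono_length (le_max_left _ _))
  · exact hk₂ (h₂.mono_length (le_max_right _ _))

theorem diff_of_finite {s : Set ℕ} (hD : IsAPSet D) (hs : s.Finite) : IsAPSet (D \ s) :=
  (hD.inter_or_diff s).resolve_left fun h => h.infinite (hs.subset inter_subset_right)

theorem diff_biUnion {ι : Type*} (hD : IsAPSet D) (s : Finset ι) {X : ι → Set ℕ}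
    (hX : ∀ i ∈ s, ¬ IsAPSet (D ∩ X i)) : IsAPSet (D \ ⋃ i ∈ s, X i) := by
  classical
  induction s using Finset.induction_on generalizing D with
  | empty => simpa using hD
  | insert a s _ ih =>
    have hDa := (hD.inter_or_diff (X a)).resolve_left (hX a (Finset.mem_insert_self a s))
    have := ih hDa fun i hi h =>
      hX i (Finset.mem_insert_of_mem hi) (h.mono fun x hx => ⟨hx.1.1, hx.2⟩)
    rwa [Finset.set_biUnion_insert, ← sdiff_sdiff]

theorem exists_separated (hD : IsAPSet D) (f : ℕ → ℕ) (M : ℕ) :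
    ∃ E ⊆ D, IsAPSet E ∧ ∀ x ∈ E, ∀ y ∈ E, f x < f y → f x + M < f y := by
  obtain ⟨r, -, hr⟩ : ∃ r ∈ Finset.range (M + 1), IsAPSet (D ∩ {x | f x % (M + 1) = r}) := by
    by_contra! h
    obtain ⟨x, -, hx⟩ := (hD.diff_biUnion _ h).nonempty
    exact hx (mem_biUnion (Finset.mem_range.2 (Nat.mod_lt _ M.succ_pos)) rfl)
  refine ⟨_, inter_subset_left, hr, fun x hx y hy hxy => ?_⟩
  have := Nat.le_of_dvd (by omega) ((Nat.modEq_iff_dvd' hxy.le).1 (hx.2.trans hy.2.symm))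
  omega

end IsAPSet

theorem subset_FS (B : Set ℕ) : B ⊆ FS B :=
  fun x hx => ⟨{x}, Finset.singleton_nonempty x, by simpa, by simp⟩

theorem add_mem_FS {B : Set ℕ} {x y : ℕ} (hx : x ∈ B) (hy : y ∈ B) (hxy : x ≠ y) :
    x + y ∈ FS B := by
  refine ⟨{x, y}, Finset.insert_nonempty x {y}, ?_, (Finset.sum_pair (f := fun i => i) hxy).symm⟩
  simpa [insert_subset_iff] using ⟨hx, hy⟩

theorem not_isIPSet_of_finite_setOf_add_mem {V : Set ℕ}
    (h : ∀ x ∈ V, 0 < x → {y | y ∈ V ∧ x + y ∈ V}.Finite) : ¬ IsIPSet V := by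
  rintro ⟨B, hB, hFS⟩
  have hBV : B ⊆ V := (subset_FS B).trans hFS
  obtain ⟨x, hxB, hx⟩ := hB.exists_gt 0
  refine hB (((h x (hBV hxB) hx).insert x).subset fun y hy => ?_)
  rcases eq_or_ne y x with rfl | hne
  · exact mem_insert _ _
  · exact mem_insert_of_mem _ ⟨hBV hy, hFS (add_mem_FS hxB hy hne.symm)⟩

theorem not_isIPSet_iUnion {V : ℕ → Set ℕ} (m : ℕ → ℕ)
    (hbound : ∀ j k, j < k → ∀ v ∈ V j, v ≤ m k)
    (hlarge : ∀ k, ∀ v ∈ V k, 2 * m k < v)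
    (hsep : ∀ k, ∀ u ∈ V k, ∀ v ∈ V k, u < v → u + m k < v) :
    ¬ IsIPSet (⋃ k, V k) := by
  refine not_isIPSet_of_finite_setOf_add_mem fun x hx hx0 => ?_
  obtain ⟨j, hxj⟩ := mem_iUnion.1 hx
  refine (finite_Iic (m (j + 1))).subset ?_
  rintro y ⟨hy, hxy⟩
  obtain ⟨l, hyl⟩ := mem_iUnion.1 hy
  obtain ⟨p, hxyp⟩ := mem_iUnion.1 hxy
  by_contra hgt
  have hjl : j < l := by
    by_contra! hlj
    exact hgt (hbound l (j + 1) (by omega) y hyl)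
  have := hbound j l hjl x hxj
  have := hlarge l y hyl
  -- `x + y` is too large for an earlier block, too close to `y` for block `l`,
  -- and too small for a later block
  rcases lt_trichotomy p l with hpl | rfl | hlp
  · have := hbound p l hpl _ hxyp
    omega
  · have := hsep p y hyl _ hxyp (by omega)
    omega
  · have := hbound l p hlp y hyl
    have := hlarge p _ hxyp
    omega

theorem exists_finset_seq_with_earlier_bound {α : Type*} (w : α → ℕ)
    {p : ℕ → ℕ → Finset α → Prop} (h : ∀ k M, ∃ P, p k M P) :
    ∃ (P : ℕ → Finset α) (m : ℕ → ℕ), (∀ k, p k (m k) (P k)) ∧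
      ∀ j k, j < k → ∀ x ∈ P j, w x ≤ m k := by
  classical
  choose F hF using h
  let acc : ℕ → Finset α := fun k => Nat.rec ∅ (fun k s => s ∪ F k (s.sup w)) k
  have hacc : Monotone acc := monotone_nat_of_le_succ fun k => Finset.subset_union_left
  refine ⟨fun k => F k ((acc k).sup w), fun k => (acc k).sup w, fun k => hF _ _,
    fun j k hjk _ hx => Finset.le_sup (hacc (Nat.succ_le_of_lt hjk) ?_)⟩
  exact Finset.subset_union_right hx

theorem Set.Infinite.exists_subset_not_isIPSet {D : Set ℕ} (hD : D.Infinite) :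
    ∃ L ⊆ D, L.Infinite ∧ ¬ IsIPSet L := by
  obtain ⟨P, m, hP, hm⟩ := exists_finset_seq_with_earlier_bound id
    (p := fun k M P => ∃ b ∈ D, 2 * M + k < b ∧ P = {b}) fun k M =>
      let ⟨b, hb, hlt⟩ := hD.exists_gt (2 * M + k)
      ⟨{b}, b, hb, hlt, rfl⟩
  choose b hbD hb hPb using hP
  refine ⟨range b, range_subset_iff.2 hbD,
    infinite_of_forall_exists_gt fun n => ⟨b n, mem_range_self n, by have := hb n; omega⟩, ?_⟩
  rw [← iUnion_singleton_eq_range]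
  refine not_isIPSet_iUnion m ?_ ?_ ?_
  · rintro j k hjk _ rfl
    exact hm j k hjk (b j) (by simp [hPb])
  · rintro k _ rfl
    have := hb k
    omega
  · rintro k _ rfl _ rfl h
    exact absurd h (lt_irrefl _)

namespace FinToOneOn

variable {f : ℕ → ℕ} {B : Set ℕ}

theorem finite_inter_preimage (hf : FinToOneOn f B) {s : Set ℕ} (hs : s.Finite) :
    (B ∩ f ⁻¹' s).Finite :=
  (hs.biUnion fun v _ => hf v).subset fun _ hx => mem_biUnion hx.2 ⟨hx.1, rfl⟩

theorem infinite_image (hf : FinToOneOn f B) {C : Set ℕ} (hCB : C ⊆ B) (hC : C.Infinite) :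
    (f '' C).Infinite :=
  fun hfin => hC ((hf.finite_inter_preimage hfin).subset fun x hx => ⟨hCB hx, x, hx, rfl⟩)

end FinToOneOn

theorem exists_separated_avoiding_block {B : Set ℕ} {f : ℕ → ℕ} {g : ℕ → Set ℕ} (hB : IsAPSet B)
    (hf : FinToOneOn f B) (hg : ∀ n, ∀ C ⊆ B, IsAPSet C → ¬ f '' C ⊆ g n) (k M : ℕ) :
    ∃ P : Finset ℕ, ↑P ⊆ B ∧ HasAPOfLength P k ∧
      ∀ x ∈ P, 2 * M < f x ∧ (∀ n ≤ k, f x ∉ g n) ∧ ∀ y ∈ P, f x < f y → f x + M < f y := by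
  classical
  set D := (B \ (B ∩ f ⁻¹' Iic (2 * M))) \ ⋃ n ∈ Finset.range (k + 1), f ⁻¹' g n
  have hD : IsAPSet D :=
    (hB.diff_of_finite (hf.finite_inter_preimage (finite_Iic _))).diff_biUnion _ fun n _ h =>
      hg n _ (inter_subset_left.trans sdiff_subset) h (image_subset_iff.2 inter_subset_right)
  have hDgood : ∀ x ∈ D, x ∈ B ∧ 2 * M < f x ∧ ∀ n ≤ k, f x ∉ g n := by
    rintro x ⟨⟨hxB, hxM⟩, hxg⟩
    refine ⟨hxB, by simpa [hxB] using hxM, fun n hn hfx => hxg ?_⟩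
    exact mem_biUnion (Finset.mem_range.2 (by omega)) hfx
  obtain ⟨E, hED, hE, hsep⟩ := hD.exists_separated f M
  obtain ⟨a, d, hd, hAP⟩ := hE k
  set P := (Finset.range k).image fun i => a + i * d
  have hPE : ↑P ⊆ E := by
    rw [Finset.coe_image]
    rintro _ ⟨i, hi, rfl⟩
    exact hAP i (Finset.mem_range.1 hi)
  refine ⟨P, fun x hx => (hDgood x (hED (hPE hx))).1,
    ⟨a, d, hd, fun i hi => Finset.mem_image_of_mem _ (Finset.mem_range.2 hi)⟩,
    fun x hx => ⟨(hDgood x (hED (hPE hx))).2.1, (hDgood x (hED (hPE hx))).2.2,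
      fun y hy => hsep x (hPE hx) y (hPE hy)⟩⟩

theorem exists_isAPSet_subset_image_not_isIPSet {B : Set ℕ} {f : ℕ → ℕ} {𝒢 : Set (Set ℕ)}
    (hB : IsAPSet B) (hf : FinToOneOn f B) (h𝒢 : 𝒢.Countable)
    (hnot : ∀ G ∈ 𝒢, ∀ C ⊆ B, IsAPSet C → ¬ f '' C ⊆ G) :
    ∃ C ⊆ B, IsAPSet C ∧ ¬ IsIPSet (f '' C) ∧ ∀ G ∈ 𝒢, (f '' C ∩ G).Finite := by
  -- `∅` makes the family nonempty and absorbs nothing, as AP-sets are nonempty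
  obtain ⟨g, hg⟩ := (h𝒢.insert ∅).exists_eq_range (insert_nonempty _ _)
  have hg' : ∀ n, ∀ C ⊆ B, IsAPSet C → ¬ f '' C ⊆ g n := by
    intro n C hCB hC hsub
    rcases (hg ▸ mem_range_self n : g n ∈ insert ∅ 𝒢) with h | h
    · exact (hC.nonempty.image f).ne_empty (subset_empty_iff.1 (h ▸ hsub))
    · exact hnot _ h C hCB hC hsub
  obtain ⟨P, m, hP, hm⟩ :=
    exists_finset_seq_with_earlier_bound f (exists_separated_avoiding_block hB hf hg')
  refine ⟨⋃ k, ↑(P k), iUnion_subset fun k => (hP k).1,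
    fun k => (hP k).2.1.mono (subset_iUnion (fun k => (P k : Set ℕ)) k), ?_, fun G hG => ?_⟩
  · rw [image_iUnion]
    refine not_isIPSet_iUnion m ?_ ?_ ?_
    · rintro j k hjk _ ⟨x, hx, rfl⟩
      exact hm j k hjk x hx
    · rintro k _ ⟨x, hx, rfl⟩
      exact ((hP k).2.2 x hx).1
    · rintro k _ ⟨x, hx, rfl⟩ _ ⟨y, hy, rfl⟩
      exact ((hP k).2.2 x hx).2.2 y hy
  · obtain ⟨n, rfl⟩ : G ∈ range g := hg ▸ mem_insert_of_mem _ hG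
    refine (finite_Iic (m n)).subset ?_
    rintro _ ⟨⟨x, hx, rfl⟩, hxg⟩
    obtain ⟨k, hk⟩ := mem_iUnion.1 hx
    have hkn : k < n := by
      by_contra! h
      exact ((hP k).2.2 x hk).2.1 n h hxg
    exact hm k n hkn x hk

abbrev Demand : Type := Set ℕ ⊕ Set ℕ × (ℕ → ℕ)

def Demand.IsMetBy : Demand → Set (Set ℕ) → Prop
  | .inl D, 𝒜 => D.Infinite → ∃ A ∈ 𝒜, (D ∩ A).Infinite
  | .inr (B, f), 𝒜 => IsAPSet B → FinToOneOn f B → ∃ C, C ⊆ B ∧ IsAPSet C ∧ ∃ A ∈ 𝒜, f '' C ⊆ A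

theorem Demand.IsMetBy.mono {t : Demand} {𝒜 𝒜' : Set (Set ℕ)} (h : t.IsMetBy 𝒜)
    (h𝒜 : 𝒜 ⊆ 𝒜') : t.IsMetBy 𝒜' := by
  rcases t with D | ⟨B, f⟩
  · exact fun hD => let ⟨A, hA, hDA⟩ := h hD; ⟨A, h𝒜 hA, hDA⟩
  · exact fun hB hf => let ⟨C, hCB, hC, A, hA, hCA⟩ := h hB hf; ⟨C, hCB, hC, A, h𝒜 hA, hCA⟩

def IsAdmissibleExtension (𝒮 : Set (Set ℕ)) (t : Demand) (S : Set ℕ) : Prop :=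
  S.Infinite ∧ ¬ IsIPSet S ∧ (∀ A ∈ 𝒮, (S ∩ A).Finite) ∧ t.IsMetBy {S}

theorem exists_isAdmissibleExtension {𝒮 : Set (Set ℕ)} {t : Demand} (h𝒮 : 𝒮.Countable)
    (ht : ¬ t.IsMetBy 𝒮) : ∃ S, IsAdmissibleExtension 𝒮 t S := by
  rcases t with D | ⟨B, f⟩
  · simp only [Demand.IsMetBy] at ht
    push Not at ht
    obtain ⟨hD, hfin⟩ := ht
    obtain ⟨L, hLD, hL, hLIP⟩ := hD.exists_subset_not_isIPSet
    refine ⟨L, hL, hLIP, fun A hA => (hfin A hA).subset (inter_subset_inter_left _ hLD),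
      fun _ => ⟨L, rfl, ?_⟩⟩
    rwa [inter_eq_right.2 hLD]
  · simp only [Demand.IsMetBy] at ht
    push Not at ht
    obtain ⟨hB, hf, hnot⟩ := ht
    obtain ⟨C, hCB, hC, hIP, hfin⟩ := exists_isAPSet_subset_image_not_isIPSet hB hf h𝒮
      fun G hG C hCB hC => hnot C hCB hC G hG
    exact ⟨f '' C, hf.infinite_image hCB hC.infinite, hIP, hfin,
      fun _ _ => ⟨C, hCB, hC, _, rfl, subset_rfl⟩⟩

open Classical in
noncomputable def nextMember (𝒮 : Set (Set ℕ)) (t : Demand) : Set (Set ℕ) :=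
  if h : ∃ S, IsAdmissibleExtension 𝒮 t S then {h.choose} else ∅

section NextMember

variable {𝒮 : Set (Set ℕ)} {t : Demand}

theorem subsingleton_nextMember : (nextMember 𝒮 t).Subsingleton := by
  unfold nextMember
  split_ifs
  exacts [subsingleton_singleton, subsingleton_empty]

theorem isAdmissibleExtension_of_mem_nextMember {S : Set ℕ} (hS : S ∈ nextMember 𝒮 t) :
    IsAdmissibleExtension 𝒮 t S := by
  unfold nextMember at hS
  split_ifs at hS with h
  · exact mem_singleton_iff.1 hS ▸ h.choose_spec
  · exact absurd hS (notMem_empty _)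

theorem isMetBy_union_nextMember (h𝒮 : 𝒮.Countable) : t.IsMetBy (𝒮 ∪ nextMember 𝒮 t) := by
  by_cases ht : t.IsMetBy 𝒮
  · exact ht.mono subset_union_left
  · have h := exists_isAdmissibleExtension h𝒮 ht
    have hS : h.choose ∈ nextMember 𝒮 t := by
      unfold nextMember
      rw [dif_pos h]
      exact mem_singleton _
    exact h.choose_spec.2.2.2.mono (singleton_subset_iff.2 (mem_union_right _ hS))

end NextMember

section Construction

variable {ι : Type*} [LinearOrder ι] [WellFoundedLT ι] (e : ι → Demand)

noncomputable def madStage : ι → Set (Set ℕ) :=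
  WellFoundedLT.fix fun i stage => nextMember (⋃ j, ⋃ hj : j < i, stage j hj) (e i)

theorem madStage_eq (i : ι) : madStage e i = nextMember (⋃ j < i, madStage e j) (e i) :=
  WellFoundedLT.fix_eq _ i

theorem countable_biUnion_madStage (hι : ∀ i : ι, (Iio i).Countable) (i : ι) :
    (⋃ j < i, madStage e j).Countable :=
  (hι i).biUnion fun j _ => by
    rw [madStage_eq]
    exact subsingleton_nextMember.countable

theorem exists_family_of_enumeration (hι : ∀ i : ι, (Iio i).Countable)
    (he : Function.Surjective e) :
    ∃ 𝒜 : Set (Set ℕ), (∀ A ∈ 𝒜, A.Infinite ∧ ¬ IsIPSet A) ∧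
      𝒜.Pairwise (fun A B => (A ∩ B).Finite) ∧ ∀ t : Demand, t.IsMetBy 𝒜 := by
  have hmem : ∀ i, ∀ S ∈ madStage e i,
      IsAdmissibleExtension (⋃ j < i, madStage e j) (e i) S := fun i S hS =>
    isAdmissibleExtension_of_mem_nextMember (madStage_eq e i ▸ hS)
  have hlt : ∀ i j, j < i → ∀ A ∈ madStage e i, ∀ B ∈ madStage e j, (A ∩ B).Finite :=
    fun i j hji A hA B hB => (hmem i A hA).2.2.1 B (mem_iUnion₂.2 ⟨j, hji, hB⟩)
  refine ⟨⋃ i, madStage e i, ?_, ?_, fun t => ?_⟩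
  · simp only [mem_iUnion]
    rintro A ⟨i, hA⟩
    exact ⟨(hmem i A hA).1, (hmem i A hA).2.1⟩
  · simp only [Set.Pairwise, mem_iUnion]
    rintro A ⟨i, hA⟩ B ⟨j, hB⟩ hAB
    rcases lt_trichotomy i j with hij | rfl | hji
    · rw [inter_comm]
      exact hlt j i hij B hB A hA
    · exact absurd ((madStage_eq e i ▸ subsingleton_nextMember) hA hB) hAB
    · exact hlt i j hji A hA B hB
  · obtain ⟨i, rfl⟩ := he t
    refine (isMetBy_union_nextMember (countable_biUnion_madStage e hι i)).mono
      (union_subset (iUnion₂_subset fun j _ => subset_iUnion _ j) ?_)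
    rw [← madStage_eq]
    exact subset_iUnion _ i

end Construction

/-- Lemma 2: under CH there is a MAD family of non-IP sets absorbing images of
finite-to-one functions on AP-sets. -/
theorem exists_special_mad_family (ch : ContinuumHypothesis) :
    ∃ 𝒜 : Set (Set ℕ),
      (∀ A ∈ 𝒜, A.Infinite) ∧
      (∀ A ∈ 𝒜, ∀ B ∈ 𝒜, A ≠ B → (A ∩ B).Finite) ∧
      (∀ D : Set ℕ, D.Infinite → ∃ A ∈ 𝒜, (D ∩ A).Infinite) ∧
      (∀ A ∈ 𝒜, ¬ IsIPSet A) ∧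
      (∀ (B : Set ℕ) (f : ℕ → ℕ), IsAPSet B → FinToOneOn f B →
        ∃ C : Set ℕ, C ⊆ B ∧ IsAPSet C ∧ ∃ A ∈ 𝒜, f '' C ⊆ A) := by
  let ι := (Cardinal.aleph 1).ord.ToType
  have hι : ∀ i : ι, (Iio i).Countable := fun i => by
    have := Cardinal.mk_Iio_lt i (by simp [ι])
    rwa [Cardinal.mk_ord_toType, Cardinal.lt_aleph_one_iff,
      Cardinal.le_aleph0_iff_set_countable] at this
  obtain ⟨E⟩ : Nonempty (Demand ≃ ι) := by
    rw [← Cardinal.eq, Cardinal.mk_ord_toType, ch]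
    simp [Cardinal.mk_sum, Cardinal.mk_set, Cardinal.mk_prod]
  obtain ⟨𝒜, hA, hAD, hmet⟩ := exists_family_of_enumeration E.symm hι E.symm.surjective
  exact ⟨𝒜, fun A h => (hA A h).1, fun A hA B hB hAB => hAD hA hB hAB, fun D => hmet (.inl D),
    fun A h => (hA A h).2, fun B f => hmet (.inr (B, f))⟩
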